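/- Let E be a directed graph, u ∈ E^0 a vertex, and X_u the set of closed paths λ = f_1⋯f_n with s(λ) = r(λ) = u and r(f_i) ≠ u for all i < n. Then the corner algebra uAu of the path algebra A = KE is isomorphic to the free unital associative K-algebra on the set X_u. -/

import Mathlib

/-!
Cutting a closed path at `u` after each of its intermediate visits to `u` factors it uniquely
into first returns to `u`. Hence concatenation is a multiplicative bijection from the words over
`X_u` onto the closed paths at `u`, the empty word giving the vertex `u`. As the paths form a
basis of `A`, its linear extension to the monoid algebra of the free monoid, which is the free
algebra, is an injective multiplicative map into `A`. Its image is spanned by the closed paths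
at `u`, and so is `uAu`, because `u λ u` is `λ` or `0`.
-/

/-- A directed graph: vertices, edges, source and range maps. -/
structure DGraph : Type 1 where
  V : Type
  Edge : Type
  s : Edge → V
  r : Edge → V

namespace DGraph

/-- A list of edges is composable if consecutive edges match up. -/
def IsComposable (G : DGraph) (l : List G.Edge) : Prop :=
  l.Chain' (fun e f => G.r e = G.s f)

/-- A path in `G`: either a trivial path at a vertex, or a nonempty composable list of edges. -/
def GPath (G : DGraph) : Type :=
  G.V ⊕ {l : List G.Edge // l ≠ [] ∧ G.IsComposable l}

namespace GPath

variable {G : DGraph}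

/-- The source of a path. -/
def src : GPath G → G.V
  | Sum.inl v => v
  | Sum.inr l => G.s (l.1.head l.2.1)

/-- The range of a path. -/
def rng : GPath G → G.V
  | Sum.inl v => v
  | Sum.inr l => G.r (l.1.getLast l.2.1)

/-- The length of a path. -/
def length : GPath G → ℕ
  | Sum.inl _ => 0
  | Sum.inr l => l.1.length

/-- The trivial path at a vertex. -/
def ofVertex (v : G.V) : GPath G := Sum.inl v

/-- The length-one path given by an edge. -/
def ofEdge (e : G.Edge) : GPath G :=
  Sum.inr ⟨[e], by refine ⟨by simp, ?_⟩; exact List.isChain_singleton _⟩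

/-- Concatenation of composable paths. -/
def comp : (p q : GPath G) → p.rng = q.src → GPath G
  | Sum.inl _, q, _ => q
  | Sum.inr l, Sum.inl _, _ => Sum.inr l
  | Sum.inr l, Sum.inr m, h => Sum.inr ⟨l.1 ++ m.1, by
      refine ⟨by simp [l.2.1], l.2.2.append m.2.2 ?_⟩
      intro x hx y hy
      rw [List.getLast?_eq_getLast l.2.1] at hx
      rw [List.head?_eq_head m.2.1] at hy
      cases hx
      cases hy
      exact h⟩

end GPath

end DGraph

open DGraph

/-- A realization of the path algebra of the graph `G` over the field `K`:
a `K`-algebra with a basis indexed by the paths of `G`, multiplying by concatenation. -/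
structure PathAlgebraOn (K : Type) [Field K] (G : DGraph) (A : Type)
    [NonUnitalRing A] [Module K A] where
  basis : Module.Basis (GPath G) K A
  mul_comp : ∀ (p q : GPath G) (h : p.rng = q.src),
      basis p * basis q = basis (p.comp q h)
  mul_ncomp : ∀ p q : GPath G, p.rng ≠ q.src → basis p * basis q = 0

/-- The set of closed paths based at `u` that pass through `u` exactly at their two
endpoints: `λ = f₁⋯fₙ` with `s(λ) = r(λ) = u` and `r(fᵢ) ≠ u` for `i < n`. -/
def firstReturns (G : DGraph) (u : G.V) : Set (GPath G) :=
  {p : GPath G | p.src = u ∧ p.rng = u ∧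
    ∃ (l : List G.Edge) (h : l ≠ [] ∧ G.IsComposable l),
      p = Sum.inr ⟨l, h⟩ ∧ ∀ e ∈ l.dropLast, G.r e ≠ u}

namespace MonoidAlgebra

variable {R M A : Type*} [CommSemiring R] [Mul M] [NonUnitalNonAssocSemiring A] [Module R A]
  [IsScalarTower R A A] [SMulCommClass R A A]

lemma coe_liftMagma_eq_linearCombination (f : M →ₙ* A) :
    ⇑(liftMagma R f) = Finsupp.linearCombination R f ∘ coeff :=
  funext fun _ => rfl

lemma range_liftMagma (f : M →ₙ* A) :
    Set.range (liftMagma R f) = Submodule.span R (Set.range f) := by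
  have hcoeff : Function.Surjective (coeff : R[M] → M →₀ R) := coeffEquiv.surjective
  rw [coe_liftMagma_eq_linearCombination, hcoeff.range_comp,
    ← Finsupp.range_linearCombination, LinearMap.coe_range]

lemma liftMagma_injective {f : M →ₙ* A} (hf : LinearIndependent R f) :
    Function.Injective (liftMagma R f) := by
  rw [coe_liftMagma_eq_linearCombination]
  exact Function.Injective.comp hf coeff_injective

end MonoidAlgebra

namespace DGraph

variable {G : DGraph} {u : G.V}

def IsClosedWalk (G : DGraph) (u : G.V) (l : List G.Edge) : Prop :=
  G.IsComposable l ∧ (∀ e ∈ l.head?, G.s e = u) ∧ ∀ e ∈ l.getLast?, G.r e = u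

def IsFirstReturn (G : DGraph) (u : G.V) (l : List G.Edge) : Prop :=
  l ≠ [] ∧ G.IsClosedWalk u l ∧ ∀ e ∈ l.dropLast, G.r e ≠ u

lemma isClosedWalk_nil : G.IsClosedWalk u [] :=
  ⟨List.isChain_nil, by simp, by simp⟩

lemma IsClosedWalk.append {l₁ l₂ : List G.Edge} (h₁ : G.IsClosedWalk u l₁)
    (h₂ : G.IsClosedWalk u l₂) : G.IsClosedWalk u (l₁ ++ l₂) := by
  refine ⟨List.isChain_append.mpr ⟨h₁.1, h₂.1, fun x hx y hy => ?_⟩, ?_, ?_⟩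
  · rw [h₁.2.2 x hx, h₂.2.1 y hy]
  · rw [List.head?_append]
    cases h : l₁.head? with
    | none => exact h₂.2.1
    | some e => simpa using h₁.2.1 e h
  · rw [List.getLast?_append]
    cases h : l₂.getLast? with
    | none => exact h₁.2.2
    | some e => simpa using h₂.2.2 e h

lemma IsClosedWalk.of_append {l₁ l₂ : List G.Edge} (h : G.IsClosedWalk u (l₁ ++ l₂))
    (hr : ∀ e ∈ l₁.getLast?, G.r e = u) : G.IsClosedWalk u l₁ ∧ G.IsClosedWalk u l₂ := by
  obtain ⟨hc, hs, hr'⟩ := h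
  obtain ⟨hc₁, hc₂, hjoin⟩ := List.isChain_append.mp hc
  rcases l₁.eq_nil_or_concat' with rfl | ⟨l₁, x, rfl⟩
  · exact ⟨isClosedWalk_nil, hc, hs, hr'⟩
  refine ⟨⟨hc₁, fun e he => hs e (by simp_all), hr⟩, hc₂, fun e he => ?_, fun e he => ?_⟩
  · rw [← hjoin x (by simp) e he]
    exact hr x (by simp)
  · exact hr' e (by rw [List.getLast?_append, Option.mem_def.mp he]; rfl)

lemma isClosedWalk_flatten {L : List (List G.Edge)} (h : ∀ l ∈ L, G.IsClosedWalk u l) :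
    G.IsClosedWalk u L.flatten := by
  induction L with
  | nil => exact isClosedWalk_nil
  | cons l L ih => exact (h l (by simp)).append (ih fun m hm => h m (by simp [hm]))

/-- A first return cannot be a proper prefix of another: its last edge would be an
intermediate visit to `u`. -/
lemma IsFirstReturn.eq_of_prefix {l₁ l₂ : List G.Edge} (h₁ : G.IsFirstReturn u l₁)
    (h₂ : G.IsFirstReturn u l₂) (h : l₁ <+: l₂) : l₁ = l₂ := by
  obtain ⟨c, rfl⟩ := h
  rcases eq_or_ne c [] with rfl | hc
  · simp
  refine absurd (h₁.2.1.2.2 _ (List.getLast?_eq_some_getLast h₁.1)) (h₂.2.2 _ ?_)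
  rw [List.dropLast_append_of_ne_nil hc]
  exact List.mem_append_left _ (List.getLast_mem h₁.1)

lemma IsFirstReturn.eq_of_append_eq_append {l₁ l₂ r₁ r₂ : List G.Edge}
    (h₁ : G.IsFirstReturn u l₁) (h₂ : G.IsFirstReturn u l₂) (h : l₁ ++ r₁ = l₂ ++ r₂) :
    l₁ = l₂ := by
  have p₁ : l₁ <+: l₂ ++ r₂ := h ▸ List.prefix_append _ _
  have p₂ : l₂ <+: l₂ ++ r₂ := List.prefix_append _ _
  rcases le_total l₁.length l₂.length with hle | hle
  · exact h₁.eq_of_prefix h₂ (List.prefix_of_prefix_length_le p₁ p₂ hle)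
  · exact (h₂.eq_of_prefix h₁ (List.prefix_of_prefix_length_le p₂ p₁ hle)).symm

lemma IsFirstReturn.flatten_injective {L₁ L₂ : List (List G.Edge)}
    (h₁ : ∀ l ∈ L₁, G.IsFirstReturn u l) (h₂ : ∀ l ∈ L₂, G.IsFirstReturn u l)
    (h : L₁.flatten = L₂.flatten) : L₁ = L₂ := by
  induction L₁ generalizing L₂ with
  | nil =>
    cases L₂ with
    | nil => rfl
    | cons l₂ L₂ => exact absurd (List.append_eq_nil_iff.mp h.symm).1 (h₂ l₂ (by simp)).1
  | cons l₁ L₁ ih =>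
    cases L₂ with
    | nil => exact absurd (List.append_eq_nil_iff.mp h).1 (h₁ l₁ (by simp)).1
    | cons l₂ L₂ =>
      rw [List.flatten_cons, List.flatten_cons] at h
      obtain rfl := (h₁ l₁ (by simp)).eq_of_append_eq_append (h₂ l₂ (by simp)) h
      rw [ih (fun l hl => h₁ l (by simp [hl])) (fun l hl => h₂ l (by simp [hl]))
        (List.append_cancel_left h)]

theorem IsClosedWalk.exists_flatten_eq {l : List G.Edge} (hl : G.IsClosedWalk u l) :
    ∃ L : List (List G.Edge), (∀ m ∈ L, G.IsFirstReturn u m) ∧ L.flatten = l := by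
  rcases l.eq_nil_or_concat' with rfl | ⟨l', x, hlx⟩
  · exact ⟨[], by simp, by simp⟩
  by_cases hvisit : ∃ e ∈ l', G.r e = u
  swap
  · have hret : G.IsFirstReturn u l := ⟨by simp [hlx], hl, by
      rw [hlx, List.dropLast_concat]
      exact fun e he h => hvisit ⟨e, he, h⟩⟩
    exact ⟨[l], by simpa using hret, by simp⟩
  obtain ⟨e, he, hre⟩ := hvisit
  obtain ⟨s, t, rfl⟩ := List.append_of_mem he
  have hsplit : l = (s ++ [e]) ++ (t ++ [x]) := by simp [hlx]
  obtain ⟨h₁, h₂⟩ := (hsplit ▸ hl).of_append (by simpa using hre)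
  obtain ⟨L₁, hL₁, hf₁⟩ := h₁.exists_flatten_eq
  obtain ⟨L₂, hL₂, hf₂⟩ := h₂.exists_flatten_eq
  refine ⟨L₁ ++ L₂, fun m hm => ?_, by rw [List.flatten_append, hf₁, hf₂, hsplit]⟩
  rcases List.mem_append.mp hm with hm | hm
  exacts [hL₁ m hm, hL₂ m hm]
termination_by l.length
decreasing_by
  all_goals simp only [hsplit, List.length_append, List.length_cons, List.length_nil]; omega

namespace GPath

def toList : GPath G → List G.Edge
  | Sum.inl _ => []
  | Sum.inr l => l.1

def ofList (v : G.V) (l : List G.Edge) (hl : G.IsComposable l) : GPath G :=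
  if h : l = [] then Sum.inl v else Sum.inr ⟨l, h, hl⟩

@[simp]
lemma toList_ofList (v : G.V) (l : List G.Edge) (hl : G.IsComposable l) :
    (ofList v l hl).toList = l := by
  by_cases h : l = [] <;> simp [ofList, h, toList]

lemma ext {p q : GPath G} (hs : p.src = q.src) (hl : p.toList = q.toList) : p = q := by
  rcases p with v | ⟨l, hl₁⟩ <;> rcases q with w | ⟨m, hm⟩
  · exact congrArg Sum.inl hs
  · exact absurd hl.symm hm.1
  · exact absurd hl hl₁.1
  · exact congrArg Sum.inr (Subtype.ext hl)

lemma src_comp (p q : GPath G) (h : p.rng = q.src) : (p.comp q h).src = p.src := by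
  rcases p with v | ⟨l, hl⟩ <;> rcases q with w | ⟨m, hm⟩
  · exact h.symm
  · exact h.symm
  · rfl
  · exact congrArg G.s (List.head_append_of_ne_nil hl.1)

lemma toList_comp (p q : GPath G) (h : p.rng = q.src) :
    (p.comp q h).toList = p.toList ++ q.toList := by
  rcases p with v | ⟨l, hl⟩ <;> rcases q with w | ⟨m, hm⟩
  · rfl
  · rfl
  · exact (List.append_nil l).symm
  · rfl

lemma comp_ofVertex (p : GPath G) (v : G.V) (h : p.rng = (ofVertex v).src) :
    p.comp (ofVertex v) h = p := by
  rcases p with w | l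
  · exact congrArg Sum.inl h.symm
  · rfl

lemma isClosedWalk_toList {p : GPath G} (hs : p.src = u) (hr : p.rng = u) :
    G.IsClosedWalk u p.toList := by
  rcases p with v | ⟨l, hne, hc⟩
  · exact isClosedWalk_nil
  · refine ⟨hc, fun e he => ?_, fun e he => ?_⟩
    · change e ∈ l.head? at he
      rw [List.head?_eq_some_head hne, Option.mem_some_iff] at he
      exact he ▸ hs
    · change e ∈ l.getLast? at he
      rw [List.getLast?_eq_some_getLast hne, Option.mem_some_iff] at he
      exact he ▸ hr

lemma src_ofList {l : List G.Edge} (hl : G.IsClosedWalk u l) : (ofList u l hl.1).src = u := by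
  by_cases h : l = []
  · simp [ofList, h, src]
  · simpa [ofList, h, src] using hl.2.1 _ (List.head?_eq_some_head h)

lemma rng_ofList {l : List G.Edge} (hl : G.IsClosedWalk u l) : (ofList u l hl.1).rng = u := by
  by_cases h : l = []
  · simp [ofList, h, rng]
  · simpa [ofList, h, rng] using hl.2.2 _ (List.getLast?_eq_some_getLast h)

lemma isFirstReturn_toList {p : GPath G} (hp : p ∈ firstReturns G u) :
    G.IsFirstReturn u p.toList := by
  obtain ⟨hs, hr, l, hl, rfl, hlast⟩ := hp
  exact ⟨hl.1, isClosedWalk_toList hs hr, hlast⟩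

lemma ofList_mem_firstReturns {l : List G.Edge} (hl : G.IsFirstReturn u l) :
    ofList u l hl.2.1.1 ∈ firstReturns G u :=
  ⟨src_ofList hl.2.1, rng_ofList hl.2.1, l, ⟨hl.1, hl.2.1.1⟩, dif_neg hl.1, hl.2.2⟩

lemma toList_injective_firstReturns :
    Function.Injective fun p : firstReturns G u => p.1.toList :=
  fun p q h => Subtype.ext (ext (p.2.1.trans q.2.1.symm) h)

end GPath

open GPath

lemma isClosedWalk_flatten_toList (w : List (firstReturns G u)) :
    G.IsClosedWalk u (w.map fun p => p.1.toList).flatten :=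
  isClosedWalk_flatten fun l hl => by
    obtain ⟨p, -, rfl⟩ := List.mem_map.mp hl
    exact (isFirstReturn_toList p.2).2.1

def pathOfWord (G : DGraph) (u : G.V) (w : FreeMonoid (firstReturns G u)) : GPath G :=
  ofList u (w.toList.map fun p => p.1.toList).flatten (isClosedWalk_flatten_toList _).1

@[simp]
lemma toList_pathOfWord (w : FreeMonoid (firstReturns G u)) :
    (pathOfWord G u w).toList = (w.toList.map fun p => p.1.toList).flatten :=
  toList_ofList ..

lemma src_pathOfWord (w : FreeMonoid (firstReturns G u)) : (pathOfWord G u w).src = u :=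
  src_ofList (isClosedWalk_flatten_toList _)

lemma rng_pathOfWord (w : FreeMonoid (firstReturns G u)) : (pathOfWord G u w).rng = u :=
  rng_ofList (isClosedWalk_flatten_toList _)

lemma pathOfWord_one : pathOfWord G u 1 = ofVertex u :=
  ext (src_pathOfWord _) (by rw [toList_pathOfWord]; rfl)

lemma pathOfWord_mul (w₁ w₂ : FreeMonoid (firstReturns G u)) :
    pathOfWord G u (w₁ * w₂) = (pathOfWord G u w₁).comp (pathOfWord G u w₂)
      (by rw [rng_pathOfWord, src_pathOfWord]) :=
  ext (by rw [src_comp, src_pathOfWord, src_pathOfWord]) (by simp [toList_comp])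

lemma pathOfWord_injective : Function.Injective (pathOfWord G u) := by
  intro w₁ w₂ h
  have hfirst (w : FreeMonoid (firstReturns G u)) :
      ∀ l ∈ w.toList.map fun p => p.1.toList, G.IsFirstReturn u l := by
    intro l hl
    obtain ⟨p, -, rfl⟩ := List.mem_map.mp hl
    exact isFirstReturn_toList p.2
  have hmap := IsFirstReturn.flatten_injective (hfirst w₁) (hfirst w₂)
    (by simpa using congrArg toList h)
  exact FreeMonoid.toList.injective (List.map_injective_iff.mpr toList_injective_firstReturns hmap)

lemma range_pathOfWord : Set.range (pathOfWord G u) = {p | p.src = u ∧ p.rng = u} := by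
  refine Set.Subset.antisymm ?_ fun p ⟨hs, hr⟩ => ?_
  · rintro _ ⟨w, rfl⟩
    exact ⟨src_pathOfWord w, rng_pathOfWord w⟩
  obtain ⟨L, hL, hflat⟩ := (isClosedWalk_toList hs hr).exists_flatten_eq
  lift L to List {l // G.IsFirstReturn u l} using hL
  refine ⟨FreeMonoid.ofList (L.map fun l => ⟨_, ofList_mem_firstReturns l.2⟩), ?_⟩
  refine ext ((src_pathOfWord _).trans hs.symm) ?_
  simpa [Function.comp_def] using hflat

end DGraph

namespace PathAlgebraOn

open DGraph GPath

variable {K : Type} [Field K] {G : DGraph} {A : Type} [NonUnitalRing A] [Module K A]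
  (PA : PathAlgebraOn K G A)

open Classical in
lemma ofVertex_mul_mul_ofVertex (v : G.V) (p : GPath G) :
    PA.basis (ofVertex v) * PA.basis p * PA.basis (ofVertex v) =
      if p.src = v ∧ p.rng = v then PA.basis p else 0 := by
  by_cases hs : p.src = v
  · rw [PA.mul_comp (ofVertex v) p hs.symm]
    by_cases hr : p.rng = v
    · rw [if_pos ⟨hs, hr⟩, PA.mul_comp _ _ hr]
      exact congrArg PA.basis (comp_ofVertex p v hr)
    · rw [if_neg (fun h => hr h.2), PA.mul_ncomp _ _ hr]
  · rw [if_neg (fun h => hs h.1), PA.mul_ncomp (ofVertex v) p (Ne.symm hs), zero_mul]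

noncomputable def wordMulHom (u : G.V) : FreeMonoid (firstReturns G u) →ₙ* A where
  toFun w := PA.basis (pathOfWord G u w)
  map_mul' w₁ w₂ := by rw [pathOfWord_mul, PA.mul_comp]

lemma coe_wordMulHom (u : G.V) : ⇑(PA.wordMulHom u) = PA.basis ∘ pathOfWord G u :=
  rfl

variable [SMulCommClass K A A] [IsScalarTower K A A]

lemma corner_eq_span (v : G.V) :
    {a : A | ∃ b, a = PA.basis (ofVertex v) * b * PA.basis (ofVertex v)} =
      Submodule.span K (PA.basis '' {p | p.src = v ∧ p.rng = v}) := by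
  classical
  let T : A →ₗ[K] A :=
    LinearMap.mulRight K (PA.basis (ofVertex v)) ∘ₗ LinearMap.mulLeft K (PA.basis (ofVertex v))
  have hT (p : GPath G) : T (PA.basis p) = if p.src = v ∧ p.rng = v then PA.basis p else 0 :=
    PA.ofVertex_mul_mul_ofVertex v p
  have hrange : {a : A | ∃ b, a = PA.basis (ofVertex v) * b * PA.basis (ofVertex v)} =
      LinearMap.range T := by
    ext a
    simp [T, eq_comm]
  rw [hrange, LinearMap.range_eq_map, ← PA.basis.span_eq, Submodule.map_span, ← Set.range_comp]
  congr 1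
  apply le_antisymm
  · rw [Submodule.span_le]
    rintro _ ⟨p, rfl⟩
    rw [Function.comp_apply, hT]
    split_ifs with hp
    exacts [Submodule.subset_span ⟨p, hp, rfl⟩, zero_mem _]
  · rw [Submodule.span_le]
    rintro _ ⟨p, hp, rfl⟩
    exact Submodule.subset_span ⟨p, by rw [Function.comp_apply, hT, if_pos (by exact hp)]⟩

noncomputable def cornerHom (u : G.V) : FreeAlgebra K (firstReturns G u) →ₙₐ[K] A :=
  (MonoidAlgebra.liftMagma K (PA.wordMulHom u)).comp
    FreeAlgebra.equivMonoidAlgebraFreeMonoid.toAlgHom.toNonUnitalAlgHom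

lemma coe_cornerHom (u : G.V) :
    ⇑(PA.cornerHom u) =
      MonoidAlgebra.liftMagma K (PA.wordMulHom u) ∘ FreeAlgebra.equivMonoidAlgebraFreeMonoid :=
  rfl

lemma cornerHom_one (u : G.V) : PA.cornerHom u 1 = PA.basis (ofVertex u) := by
  rw [coe_cornerHom, Function.comp_apply, map_one, MonoidAlgebra.one_def]
  simp [wordMulHom, pathOfWord_one]

lemma cornerHom_injective (u : G.V) : Function.Injective (PA.cornerHom u) := by
  have hli : LinearIndependent K (PA.wordMulHom u) := by
    rw [coe_wordMulHom]
    exact PA.basis.linearIndependent.comp _ pathOfWord_injective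
  rw [coe_cornerHom]
  exact (MonoidAlgebra.liftMagma_injective hli).comp
    FreeAlgebra.equivMonoidAlgebraFreeMonoid.injective

lemma range_cornerHom (u : G.V) :
    Set.range (PA.cornerHom u) =
      {a : A | ∃ b, a = PA.basis (ofVertex u) * b * PA.basis (ofVertex u)} := by
  rw [coe_cornerHom, FreeAlgebra.equivMonoidAlgebraFreeMonoid.surjective.range_comp,
    MonoidAlgebra.range_liftMagma, corner_eq_span, ← range_pathOfWord, ← Set.range_comp,
    coe_wordMulHom]

end PathAlgebraOn

/-- the corner `uAu` of a path algebra is isomorphic to the free unital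
associative algebra on `X_u`. -/
theorem stmt5 (K : Type) [Field K] (G : DGraph) (u : G.V)
    (A : Type) [NonUnitalRing A] [Module K A] [SMulCommClass K A A] [IsScalarTower K A A]
    (PA : PathAlgebraOn K G A) :
    ∃ φ : FreeAlgebra K (firstReturns G u) →ₗ[K] A,
      Function.Injective φ ∧
      (∀ x y : FreeAlgebra K (firstReturns G u), φ (x * y) = φ x * φ y) ∧
      φ 1 = PA.basis (GPath.ofVertex u) ∧
      Set.range φ = {a : A | ∃ b : A,
        a = PA.basis (GPath.ofVertex u) * b * PA.basis (GPath.ofVertex u)} :=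
  ⟨(PA.cornerHom u : _ →ₗ[K] A), PA.cornerHom_injective u, map_mul (PA.cornerHom u),
    PA.cornerHom_one u, PA.range_cornerHom u⟩
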